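/- arXiv:2107.04753 — 3 statements merged into one kernel-verified Lean document; each statement's English description precedes it below -/
import Mathlib

section
/- Let (V,Y,1,s) be a vertex algebra over k and n ∈ Z≥0. Set M(n,V) = V ⊗ M(n,k), where M(n,k) is the full matrix algebra of order n over k, with state-field map Y^{M(n,V)}(A,z)B = (Y(v_{ij},z))·B (matrix product of the matrix of fields with B) for A = (v_{ij}), B = (u_{ij}) with entries in V, vacuum vector 1·E_n (E_n the identity matrix) and translation operator acting entrywise by s. Then (M(n,V), Y^{M(n,V)}, 1·E_n, s·E_n) is an S-local vertex algebra. -/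
/-!
Every entry of `Y(A,z)Y(B,w)C` is a finite sum `∑ Y(A_il,z)Y(B_ll',w)C_l'j`, and similarly for
`Y(Y(A,z)B,-w)C` and `i_{z,w}Y(A,z-w)Y(B,-w)C`, so truncation, the vacuum axioms, translation
covariance and associativity hold entrywise, with one power of `z - w` that serves the finitely
many entries. Locality fails because the matrix product does not commute, but the term
`Y(B_ll',w)Y(A_il,z)C_l'j` is the `(i,j)` entry of `Y(E_{il}B_ll',w)Y(E_{ll'}A_il,z)C`; summing these
over `(i,l,l')` gives `S`-locality with `n³` pairs.
-/

open scoped TensorProduct DirectSum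

namespace HopfVA

/-- Generalized binomial coefficient `C(r, j)` for an integer `r` (exact division). -/
def ibinom (r : ℤ) (j : ℕ) : ℤ := (∏ i ∈ Finset.range j, (r - (i : ℤ))) / (j.factorial : ℤ)

/-- `(-1)^q` for an integer exponent `q`. -/
def negOnePow (q : ℤ) : ℤ := if Even q then 1 else -1

section Core

variable {k : Type*} [CommRing k] {V : Type*} [AddCommGroup V] [Module k V]

/-- If `f p q` is the coefficient of `z^p w^q` of a two-variable formal distribution,
then `zwMul n f p q` is the coefficient of `z^p w^q` of `(z-w)^n` times that distribution. -/
def zwMul (n : ℕ) (f : ℤ → ℤ → V) : ℤ → ℤ → V := fun p q =>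
  ∑ i ∈ Finset.range (n + 1),
    ((-1 : ℤ) ^ i * (n.choose i : ℤ)) • f (p - ((n : ℤ) - (i : ℤ))) (q - (i : ℤ))

/-- The data of a state-field correspondence on a pointed vector space:
`Y a n b` is the `n`-th product `a_n b` (so that `Y(a,z)b = ∑ (a_n b) z^{-n-1}`),
`vac` is the vacuum vector and `T` is the translation operator. -/
structure VAData (k V : Type*) [CommRing k] [AddCommGroup V] [Module k V] where
  Y : V →ₗ[k] ℤ → Module.End k V
  vac : V
  T : Module.End k V

namespace VAData

variable (F : VAData k V)

/-- coefficient of `z^p w^q` in `Y(a,z)Y(b,w)c`. -/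
def prodZW (a b c : V) : ℤ → ℤ → V := fun p q => F.Y a (-p - 1) (F.Y b (-q - 1) c)

/-- coefficient of `z^p w^q` in `Y(b,w)Y(a,z)c`. -/
def prodWZ (a b c : V) : ℤ → ℤ → V := fun p q => F.Y b (-q - 1) (F.Y a (-p - 1) c)

/-- coefficient of `z^p w^q` in `i_{z,w} Y(a,z-w)Y(b,-w)c`. -/
noncomputable def compLHS (a b c : V) : ℤ → ℤ → V := fun p q =>
  negOnePow q •
    ∑ᶠ j : ℕ, ibinom (p + (j : ℤ)) j • F.Y a (-p - 1 - (j : ℤ)) (F.Y b ((j : ℤ) - 1 - q) c)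

/-- Truncated (at `j < J`) version of `compLHS`, for `h`-adic statements. -/
def compLHStr (J : ℕ) (a b c : V) : ℤ → ℤ → V := fun p q =>
  negOnePow q •
    ∑ j ∈ Finset.range J, ibinom (p + (j : ℤ)) j • F.Y a (-p - 1 - (j : ℤ)) (F.Y b ((j : ℤ) - 1 - q) c)

/-- coefficient of `z^p w^q` in `Y(Y(a,z)b,-w)c`. -/
def compRHS (a b c : V) : ℤ → ℤ → V := fun p q =>
  negOnePow q • F.Y (F.Y a (-p - 1) b) (-q - 1) c

/-- The axioms of a state-field correspondence: truncation, the vacuum axioms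
`Y(1,z)a = a`, `Y(a,z)1 = a + (Ta)z + ⋯ ∈ V[[z]]`, and translation covariance
`[T, Y(a,z)] = Y(Ta,z) = ∂_z Y(a,z)`. -/
def IsStateField : Prop :=
  (∀ a b : V, ∃ N : ℤ, ∀ n : ℤ, N ≤ n → F.Y a n b = 0) ∧
  (∀ (a : V) (n : ℤ), F.Y F.vac n a = if n = -1 then a else 0) ∧
  (∀ (a : V) (n : ℤ), 0 ≤ n → F.Y a n F.vac = 0) ∧
  (∀ a : V, F.Y a (-1) F.vac = a) ∧
  (∀ a : V, F.Y a (-2) F.vac = F.T a) ∧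
  (∀ (a b : V) (n : ℤ), F.Y (F.T a) n b = F.T (F.Y a n b) - F.Y a n (F.T b)) ∧
  (∀ (a b : V) (n : ℤ), F.Y (F.T a) n b = (-n : ℤ) • F.Y a (n - 1) b)

/-- The associativity relation
`(z-w)^N i_{z,w} Y(a,z-w)Y(b,-w)c = (z-w)^N Y(Y(a,z)b,-w)c`. -/
def IsAssocFA : Prop := ∀ a b c : V, ∃ N : ℕ, ∀ p q : ℤ,
  zwMul N (F.compLHS a b c) p q = zwMul N (F.compRHS a b c) p q

/-- A field algebra is a state-field correspondence satisfying associativity. -/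
def IsFieldAlgebra : Prop := F.IsStateField ∧ F.IsAssocFA

/-- `(z-w)^n [Y(a,z), Y(b,w)] = 0`. -/
def IsLocalPair (a b : V) : Prop :=
  ∃ n : ℕ, ∀ (c : V) (p q : ℤ), zwMul n (F.prodZW a b c) p q = zwMul n (F.prodWZ a b c) p q

/-- A vertex algebra is a field algebra all of whose pairs of fields are local. -/
def IsVertexAlgebra : Prop := F.IsFieldAlgebra ∧ ∀ a b : V, F.IsLocalPair a b

/-- `(z-w)^n Y(a,z)Y(b,w) = (z-w)^n ∑ᵢ Y(bⁱ,w)Y(aⁱ,z)`. -/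
def IsSLocalPair (a b : V) : Prop :=
  ∃ (n m : ℕ) (A B : Fin m → V), ∀ (c : V) (p q : ℤ),
    zwMul n (F.prodZW a b c) p q = ∑ i, zwMul n (F.prodWZ (A i) (B i) c) p q

/-- An `S`-local vertex algebra is a field algebra all of whose pairs of fields
are `S`-local. -/
def IsSLocalVA : Prop := F.IsFieldAlgebra ∧ ∀ a b : V, F.IsSLocalPair a b

end VAData

/-- Data of a module over a field algebra: the module fields `Y^M` and translation `sM`. -/
structure VModData (k V M : Type*) [CommRing k] [AddCommGroup V] [Module k V]
    [AddCommGroup M] [Module k M] where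
  YM : V →ₗ[k] ℤ → Module.End k M
  sM : Module.End k M

namespace VModData

variable {M : Type*} [AddCommGroup M] [Module k M]

/-- coefficient of `z^p w^q` in `Y^M(a,z)Y^M(b,w)x`. -/
def mprodZW (Mo : VModData k V M) (a b : V) (x : M) : ℤ → ℤ → M := fun p q =>
  Mo.YM a (-p - 1) (Mo.YM b (-q - 1) x)

/-- coefficient of `z^p w^q` in `Y^M(b,w)Y^M(a,z)x`. -/
def mprodWZ (Mo : VModData k V M) (a b : V) (x : M) : ℤ → ℤ → M := fun p q =>
  Mo.YM b (-q - 1) (Mo.YM a (-p - 1) x)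

/-- coefficient of `z^p w^q` in `i_{z,w} Y^M(a,z-w)Y^M(b,-w)x`. -/
noncomputable def mcompLHS (Mo : VModData k V M) (a b : V) (x : M) : ℤ → ℤ → M := fun p q =>
  negOnePow q •
    ∑ᶠ j : ℕ, ibinom (p + (j : ℤ)) j • Mo.YM a (-p - 1 - (j : ℤ)) (Mo.YM b ((j : ℤ) - 1 - q) x)

/-- coefficient of `z^p w^q` in `Y^M(Y(a,z)b,-w)x`. -/
def mcompRHS (F : VAData k V) (Mo : VModData k V M) (a b : V) (x : M) : ℤ → ℤ → M := fun p q =>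
  negOnePow q • Mo.YM (F.Y a (-p - 1) b) (-q - 1) x

/-- `M` is a left module over the field algebra `F`: truncation, vacuum, translation
invariance and the associativity axiom. -/
def IsModule (F : VAData k V) (Mo : VModData k V M) : Prop :=
  (∀ (a : V) (x : M), ∃ N : ℤ, ∀ n : ℤ, N ≤ n → Mo.YM a n x = 0) ∧
  (∀ (x : M) (n : ℤ), Mo.YM F.vac n x = if n = -1 then x else 0) ∧
  (∀ (a : V) (x : M) (n : ℤ),
      Mo.sM (Mo.YM a n x) - Mo.YM a n (Mo.sM x) = (-n : ℤ) • Mo.YM a (n - 1) x) ∧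
  (∀ (a b : V) (x : M), ∃ N : ℕ, ∀ p q : ℤ,
      zwMul N (mcompLHS Mo a b x) p q = zwMul N (mcompRHS F Mo a b x) p q)

/-- Locality of the module fields `Y^M(a,z)`, `Y^M(b,w)`. -/
def IsLocalModPair (Mo : VModData k V M) (a b : V) : Prop :=
  ∃ n : ℕ, ∀ (x : M) (p q : ℤ),
    zwMul n (mprodZW Mo a b x) p q = zwMul n (mprodWZ Mo a b x) p q

/-- `S`-locality of the module fields. -/
def IsSLocalModPair (Mo : VModData k V M) (a b : V) : Prop :=
  ∃ (n m : ℕ) (A B : Fin m → V), ∀ (x : M) (p q : ℤ),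
    zwMul n (mprodZW Mo a b x) p q = ∑ i, zwMul n (mprodWZ Mo (A i) (B i) x) p q

end VModData

/-- The `f`-product `a_(f) b = Res_z f(z) Y(a,z) b`, where `f n` is the coefficient
of `z^n` in `f`. -/
noncomputable def fProduct (F : VAData k V) (f : ℤ → k) (a b : V) : V :=
  ∑ᶠ n : ℤ, f n • F.Y a n b

/-- Coefficients of the formal derivative `∂_z f`. -/
def derivCoef (f : ℤ → k) : ℤ → k := fun n => ((n : ℤ) + 1 : ℤ) • f (n + 1)

/-- The subspace `V_(g) V` spanned by all products `a_(g) b` with `g = ∂_z f`. -/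
noncomputable def gSpan (F : VAData k V) (f : ℤ → k) : Submodule k V :=
  Submodule.span k {x : V | ∃ a b : V, x = fProduct F (derivCoef f) a b}

/-- `x ≡ y mod h^M`, where `h = r`. -/
def ModH (r : k) (M : ℕ) (x y : V) : Prop := ∃ v : V, x - y = r ^ M • v

/-- An automorphism of the (state-field data of a) vertex algebra `F`. -/
def IsVAAut (F : VAData k V) (φ : V ≃ₗ[k] V) : Prop :=
  φ F.vac = F.vac ∧ (∀ v : V, φ (F.T v) = F.T (φ v)) ∧
  ∀ (a b : V) (n : ℤ), φ (F.Y a n b) = F.Y (φ a) n (φ b)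

end Core

/-- The coefficients of `f(z) = z⁻¹`. -/
def zinvCoef (k : Type*) [CommRing k] : ℤ → k := fun n => if n = -1 then 1 else 0

/-- The coefficients of `f(z) = c·e^{cz}/(e^{cz}-1)
  = z⁻¹ + c + ∑_{m≥1} B_m c^m z^{m-1}/m!` (Bernoulli numbers `B_m`). -/
noncomputable def berCoef {k : Type*} [Field k] [CharZero k] (c : k) : ℤ → k := fun n =>
  if n < -1 then 0
  else ((bernoulli (n + 1).toNat : ℚ) • (c ^ (n + 1).toNat)) / ((n + 1).toNat.factorial : k)
        + (if n = 0 then c else 0)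

/-- `f(z) = z⁻¹` or `f(z) = c·e^{cz}/(e^{cz}-1)` with `c ≠ 0`. -/
def AdmissibleF {k : Type*} [Field k] [CharZero k] (f : ℤ → k) : Prop :=
  f = zinvCoef k ∨ ∃ c : k, c ≠ 0 ∧ f = berCoef c

section HopfDefs

variable {k : Type*} [CommRing k] {V : Type*} [AddCommGroup V] [Module k V]
variable (H : Type*) [Ring H] [HopfAlgebra k H]

/-- `V` is an `H`-module field algebra: `h·1 = ε(h)1`, `h(Ta) = T(ha)` and
`h(aₙb) = ∑ (h₁a)ₙ(h₂b)` (the last condition quantified over all finite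
representations of `Δ(h)`). -/
def IsHModuleFA [Module H V] [IsScalarTower k H V] (F : VAData k V) : Prop :=
  (∀ h : H, h • F.vac = (Coalgebra.counit (R := k) h) • F.vac) ∧
  (∀ (h : H) (a : V), h • (F.T a : V) = F.T (h • a)) ∧
  (∀ (h : H) (a b : V) (n : ℤ) (m : ℕ) (h1 h2 : Fin m → H),
      Coalgebra.comul (R := k) h = ∑ i, h1 i ⊗ₜ[k] h2 i →
      h • (F.Y a n b : V) = ∑ i, F.Y (h1 i • a) n (h2 i • b))

/-- The smash product structure `V # H` on `V ⊗ H`: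
`Y(a#h,z)(b#g) = ∑ Y(a,z)(h₁b) # h₂g`, vacuum `1#1`, translation `T#1`. -/
def SmashChar [Module H V] [IsScalarTower k H V] (F : VAData k V)
    (FS : VAData k (V ⊗[k] H)) : Prop :=
  (∀ (a b : V) (h g : H) (n : ℤ) (m : ℕ) (h1 h2 : Fin m → H),
      Coalgebra.comul (R := k) h = ∑ i, h1 i ⊗ₜ[k] h2 i →
      FS.Y (a ⊗ₜ[k] h) n (b ⊗ₜ[k] g) = ∑ i, (F.Y a n (h1 i • b) : V) ⊗ₜ[k] (h2 i * g)) ∧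
  (FS.vac = F.vac ⊗ₜ[k] (1 : H)) ∧
  (∀ (a : V) (h : H), FS.T (a ⊗ₜ[k] h) = (F.T a : V) ⊗ₜ[k] h)

end HopfDefs

/-- The fixed point subspace `V^H = {v | h v = ε(h) v for all h}`. -/
def hFixed (k V H : Type*) [CommRing k] [AddCommGroup V] [Module k V]
    [Ring H] [HopfAlgebra k H] [Module H V] [IsScalarTower k H V]
    [SMulCommClass k H V] : Submodule k V where
  carrier := {v : V | ∀ h : H, h • v = (Coalgebra.counit (R := k) h) • v}
  add_mem' := by
    intro a b ha hb h
    rw [smul_add, ha h, hb h, ← smul_add]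
  zero_mem' := by
    intro h
    simp
  smul_mem' := by
    intro c v hv h
    rw [← smul_comm c h v, hv h, smul_smul, smul_smul, mul_comm]

end HopfVA

namespace HopfVA

open Filter

section ZWMul

variable {V : Type*} [AddCommGroup V]

theorem zwMul_succ (n : ℕ) (f : ℤ → ℤ → V) (p q : ℤ) :
    zwMul (n + 1) f p q = zwMul n f (p - 1) q - zwMul n f p (q - 1) := by
  set g : ℕ → V := fun i => ((-1 : ℤ) ^ i * (n.choose i : ℤ)) • f (p - 1 - (n - i)) (q - i)
  have hshift : zwMul n f (p - 1) q = ∑ i ∈ Finset.range (n + 1), g (i + 1) + g 0 := by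
    rw [← Finset.sum_range_succ', Finset.sum_range_succ]
    simp [g, zwMul, sub_sub]
  rw [hshift, zwMul, Finset.sum_range_succ', zwMul, ← sub_add_eq_add_sub, ← Finset.sum_sub_distrib]
  congr 1
  · refine Finset.sum_congr rfl fun i _ => ?_
    have hp : p - 1 - ((n : ℤ) - (i + 1 : ℕ)) = p - ((n : ℤ) - i) := by push_cast; ring
    have hp' : p - ((n + 1 : ℕ) - (i + 1 : ℕ) : ℤ) = p - ((n : ℤ) - i) := by push_cast; ring
    have hq : q - ((i + 1 : ℕ) : ℤ) = q - 1 - i := by push_cast; ring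
    simp only [g]
    rw [hp, hp', hq, ← sub_smul, Nat.choose_succ_succ']
    congr 1
    push_cast
    ring
  · simp [g, sub_sub, add_comm]

theorem zwMul_eq_of_le {N N' : ℕ} (hN : N ≤ N') {f g : ℤ → ℤ → V}
    (h : ∀ p q, zwMul N f p q = zwMul N g p q) (p q : ℤ) :
    zwMul N' f p q = zwMul N' g p q := by
  induction N', hN using Nat.le_induction generalizing p q with
  | base => exact h p q
  | succ N' _ ih => rw [zwMul_succ, zwMul_succ, ih, ih]

theorem zwMul_sum {σ : Type*} (s : Finset σ) (f : σ → ℤ → ℤ → V) (n : ℕ) (p q : ℤ) :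
    zwMul n (fun p q => ∑ t ∈ s, f t p q) p q = ∑ t ∈ s, zwMul n (f t) p q := by
  simp only [zwMul, Finset.smul_sum]
  exact Finset.sum_comm

theorem zwMul_ite_zero (P : Prop) [Decidable P] (f : ℤ → ℤ → V) (n : ℕ) (p q : ℤ) :
    zwMul n (fun p q => if P then f p q else 0) p q = if P then zwMul n f p q else 0 := by
  split_ifs <;> simp [zwMul]

theorem zwMul_matrix_apply {ι : Type*} (n : ℕ) (f : ℤ → ℤ → Matrix ι ι V) (p q : ℤ) (i j : ι) :
    zwMul n f p q i j = zwMul n (fun p q => f p q i j) p q := by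
  simp [zwMul, Matrix.sum_apply]

end ZWMul

namespace VAData

variable {k : Type*} [CommRing k] {V : Type*} [AddCommGroup V] [Module k V]

theorem IsStateField.eventually_Y_eq_zero {F : VAData k V} (hF : F.IsStateField) (a b : V) :
    ∀ᶠ m in atTop, F.Y a m b = 0 :=
  eventually_atTop.2 (hF.1 a b)

theorem eventually_compLHS_eq_compLHStr {F : VAData k V} {b c : V}
    (hbc : ∀ᶠ m in atTop, F.Y b m c = 0) (a : V) (p q : ℤ) :
    ∀ᶠ J in atTop, F.compLHS a b c p q = F.compLHStr J a b c p q := by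
  obtain ⟨N, hN⟩ := eventually_atTop.1 hbc
  refine eventually_atTop.2 ⟨(N + 1 + q).toNat, fun J hJ => ?_⟩
  rw [compLHS, compLHStr, finsum_eq_sum_of_support_subset]
  intro x hx
  by_contra hxJ
  simp only [Finset.coe_range, Set.mem_Iio, not_lt] at hxJ
  exact hx (by simp only [hN _ (by omega : N ≤ (x : ℤ) - 1 - q), map_zero, smul_zero])

theorem isSLocalPair_of_sum {F : VAData k V} {σ : Type*} [Fintype σ] {a b : V} (n : ℕ)
    (A B : σ → V)
    (h : ∀ c p q, zwMul n (F.prodZW a b c) p q = ∑ t, zwMul n (F.prodWZ (A t) (B t) c) p q) :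
    F.IsSLocalPair a b :=
  let e := Fintype.equivFin σ
  ⟨n, Fintype.card σ, A ∘ e.symm, B ∘ e.symm, fun c p q =>
    (h c p q).trans (e.symm.sum_comp fun t => zwMul n (F.prodWZ (A t) (B t) c) p q).symm⟩

variable (F : VAData k V) {ι : Type*} [Fintype ι] [DecidableEq ι]

def matrixY : Matrix ι ι V →ₗ[k] ℤ → Module.End k (Matrix ι ι V) :=
  LinearMap.pi fun m => LinearMap.mk₂ k (fun A B => Matrix.of fun i j => ∑ l, F.Y (A i l) m (B l j))
    (fun _ _ _ => by ext; simp [Finset.sum_add_distrib])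
    (fun _ _ _ => by ext; simp [Finset.smul_sum])
    (fun _ _ _ => by ext; simp [Finset.sum_add_distrib])
    (fun _ _ _ => by ext; simp [Finset.smul_sum])

def matrix (ι : Type*) [Fintype ι] [DecidableEq ι] : VAData k (Matrix ι ι V) where
  Y := F.matrixY
  vac := Matrix.diagonal fun _ => F.vac
  T := F.T.mapMatrix

@[simp]
theorem matrix_Y_apply (A B : Matrix ι ι V) (m : ℤ) (i j : ι) :
    (F.matrix ι).Y A m B i j = ∑ l, F.Y (A i l) m (B l j) := rfl

theorem matrix_vac : (F.matrix ι).vac = Matrix.diagonal fun _ => F.vac := rfl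

theorem matrix_T_apply (A : Matrix ι ι V) (i j : ι) : (F.matrix ι).T A i j = F.T (A i j) := rfl

theorem matrix_Y_diagonal_left (a : V) (B : Matrix ι ι V) (m : ℤ) (i j : ι) :
    (F.matrix ι).Y (Matrix.diagonal fun _ => a) m B i j = F.Y a m (B i j) := by
  rw [matrix_Y_apply, Finset.sum_eq_single i (fun l _ hl => by simp [hl.symm]) (by simp)]
  simp

theorem matrix_Y_diagonal_right (A : Matrix ι ι V) (b : V) (m : ℤ) (i j : ι) :
    (F.matrix ι).Y A m (Matrix.diagonal fun _ => b) i j = F.Y (A i j) m b := by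
  rw [matrix_Y_apply, Finset.sum_eq_single j (fun l _ hl => by simp [hl]) (by simp)]
  simp

theorem matrix_Y_Y_apply (A B C : Matrix ι ι V) (m m' : ℤ) (i j : ι) :
    (F.matrix ι).Y A m ((F.matrix ι).Y B m' C) i j
      = ∑ l, ∑ l', F.Y (A i l) m (F.Y (B l l') m' (C l' j)) := by
  simp

theorem matrix_prodZW_apply (A B C : Matrix ι ι V) (p q : ℤ) (i j : ι) :
    (F.matrix ι).prodZW A B C p q i j = ∑ l, ∑ l', F.prodZW (A i l) (B l l') (C l' j) p q :=
  F.matrix_Y_Y_apply A B C _ _ i j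

theorem matrix_compRHS_apply (A B C : Matrix ι ι V) (p q : ℤ) (i j : ι) :
    (F.matrix ι).compRHS A B C p q i j = ∑ l, ∑ l', F.compRHS (A i l) (B l l') (C l' j) p q := by
  simp only [compRHS, Matrix.smul_apply, matrix_Y_apply, map_sum, Finset.sum_apply,
    LinearMap.sum_apply, Finset.smul_sum]
  exact Finset.sum_comm

theorem matrix_compLHStr_apply (J : ℕ) (A B C : Matrix ι ι V) (p q : ℤ) (i j : ι) :
    (F.matrix ι).compLHStr J A B C p q i j
      = ∑ l, ∑ l', F.compLHStr J (A i l) (B l l') (C l' j) p q := by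
  simp only [compLHStr, Matrix.smul_apply, Matrix.sum_apply, matrix_Y_Y_apply, Finset.smul_sum]
  rw [Finset.sum_comm]
  exact Finset.sum_congr rfl fun l _ => Finset.sum_comm

theorem matrix_Y_single_apply (a b : ι) (x : V) (C : Matrix ι ι V) (m : ℤ) (i j : ι) :
    (F.matrix ι).Y (Matrix.single a b x) m C i j = if i = a then F.Y x m (C b j) else 0 := by
  rw [matrix_Y_apply, Finset.sum_eq_single b (fun l _ hl => by simp [hl.symm]) (by simp)]
  by_cases h : i = a <;> simp [h, Ne.symm]

theorem matrix_prodWZ_single_apply (i₀ l l' : ι) (a b : V) (C : Matrix ι ι V) (p q : ℤ)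
    (i j : ι) :
    (F.matrix ι).prodWZ (Matrix.single l l' a) (Matrix.single i₀ l b) C p q i j
      = if i = i₀ then F.prodWZ a b (C l' j) p q else 0 := by
  simp only [prodWZ, matrix_Y_single_apply, if_true]

variable {F}

theorem matrix_eventually_Y_eq_zero (htrunc : ∀ a b : V, ∀ᶠ m in atTop, F.Y a m b = 0)
    (A B : Matrix ι ι V) : ∀ᶠ m in atTop, (F.matrix ι).Y A m B = 0 := by
  filter_upwards [eventually_all.2 fun t : ι × ι × ι => htrunc (A t.1 t.2.1) (B t.2.1 t.2.2)]
    with m hm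
  ext i j
  exact Finset.sum_eq_zero fun l _ => hm (i, l, j)

theorem matrix_compLHS_apply (htrunc : ∀ a b : V, ∀ᶠ m in atTop, F.Y a m b = 0)
    (A B C : Matrix ι ι V) (p q : ℤ) (i j : ι) :
    (F.matrix ι).compLHS A B C p q i j = ∑ l, ∑ l', F.compLHS (A i l) (B l l') (C l' j) p q := by
  obtain ⟨J, hJ, hJ'⟩ := ((eventually_compLHS_eq_compLHStr
    (matrix_eventually_Y_eq_zero htrunc B C) A p q).and
    (eventually_all.2 fun t : ι × ι => eventually_compLHS_eq_compLHStr
      (htrunc (B t.1 t.2) (C t.2 j)) (A i t.1) p q)).exists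
  rw [hJ, matrix_compLHStr_apply]
  exact Finset.sum_congr rfl fun l _ => Finset.sum_congr rfl fun l' _ => (hJ' (l, l')).symm

theorem matrix_isStateField (hF : F.IsStateField) : (F.matrix ι).IsStateField := by
  have htrunc := hF.eventually_Y_eq_zero
  obtain ⟨-, hvac, hYvac, hYvac₁, hYvac₂, hT, hD⟩ := hF
  refine ⟨fun A B => eventually_atTop.1 (matrix_eventually_Y_eq_zero htrunc A B),
    ?_, ?_, ?_, ?_, ?_, ?_⟩
  · intro A m
    ext i j
    rw [matrix_vac, matrix_Y_diagonal_left, hvac]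
    split_ifs <;> rfl
  · intro A m hm
    ext i j
    rw [matrix_vac, matrix_Y_diagonal_right, hYvac _ _ hm]
    rfl
  · intro A
    ext i j
    exact (F.matrix_Y_diagonal_right A _ _ i j).trans (hYvac₁ _)
  · intro A
    ext i j
    exact (F.matrix_Y_diagonal_right A _ _ i j).trans (hYvac₂ _)
  · intro A B m
    ext i j
    simp [matrix_T_apply, hT, Finset.sum_sub_distrib]
  · intro A B m
    ext i j
    simp [matrix_T_apply, hD, Finset.smul_sum]

theorem matrix_isAssocFA (htrunc : ∀ a b : V, ∀ᶠ m in atTop, F.Y a m b = 0)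
    (hassoc : F.IsAssocFA) : (F.matrix ι).IsAssocFA := by
  intro A B C
  obtain ⟨N, hN⟩ := (eventually_all.2 fun t : ι × ι × ι × ι =>
    let ⟨N, h⟩ := hassoc (A t.1 t.2.1) (B t.2.1 t.2.2.1) (C t.2.2.1 t.2.2.2)
    eventually_atTop.2 ⟨N, fun _ hN' => zwMul_eq_of_le hN' h⟩).exists
  refine ⟨N, fun p q => ?_⟩
  ext i j
  simp only [zwMul_matrix_apply, matrix_compLHS_apply htrunc, matrix_compRHS_apply, zwMul_sum]
  exact Finset.sum_congr rfl fun l _ => Finset.sum_congr rfl fun l' _ => hN (i, l, l', j) p q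

theorem matrix_isSLocalPair (hloc : ∀ a b : V, F.IsLocalPair a b) (A B : Matrix ι ι V) :
    (F.matrix ι).IsSLocalPair A B := by
  obtain ⟨N, hN⟩ := (eventually_all.2 fun t : ι × ι × ι =>
    let ⟨N, h⟩ := hloc (A t.1 t.2.1) (B t.2.1 t.2.2)
    eventually_atTop.2 ⟨N, fun _ hN' c => zwMul_eq_of_le hN' (h c)⟩).exists
  refine isSLocalPair_of_sum N (fun t : ι × ι × ι => Matrix.single t.2.1 t.2.2 (A t.1 t.2.1))
    (fun t : ι × ι × ι => Matrix.single t.1 t.2.1 (B t.2.1 t.2.2)) fun C p q => ?_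
  ext i j
  simp only [zwMul_matrix_apply, Matrix.sum_apply, matrix_prodZW_apply, matrix_prodWZ_single_apply,
    zwMul_sum, zwMul_ite_zero, Fintype.sum_prod_type, Finset.sum_ite_irrel, Finset.sum_const_zero,
    Finset.sum_ite_eq, Finset.mem_univ, if_true]
  exact Finset.sum_congr rfl fun l _ => Finset.sum_congr rfl fun l' _ => hN (i, l, l') _ p q

theorem matrix_isSLocalVA (hF : F.IsVertexAlgebra) : (F.matrix ι).IsSLocalVA :=
  ⟨⟨matrix_isStateField hF.1.1, matrix_isAssocFA hF.1.1.eventually_Y_eq_zero hF.1.2⟩,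
    matrix_isSLocalPair hF.2⟩

end VAData

theorem statement1_general {k : Type*} [Field k]
    {V : Type*} [AddCommGroup V] [Module k V]
    (F : VAData k V) (hF : F.IsVertexAlgebra) (n : ℕ) :
    ∃ FM : VAData k (Matrix (Fin n) (Fin n) V),
      (∀ (A B : Matrix (Fin n) (Fin n) V) (m : ℤ) (i j : Fin n),
          FM.Y A m B i j = ∑ l : Fin n, F.Y (A i l) m (B l j)) ∧
      (∀ i j : Fin n, FM.vac i j = if i = j then F.vac else 0) ∧
      (∀ (A : Matrix (Fin n) (Fin n) V) (i j : Fin n), FM.T A i j = F.T (A i j)) ∧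
      FM.IsSLocalVA :=
  ⟨F.matrix (Fin n), F.matrix_Y_apply, fun i j => Matrix.diagonal_apply _ i j, F.matrix_T_apply,
    VAData.matrix_isSLocalVA hF⟩

/-- If `(V,Y,1,s)` is a vertex algebra and `n ∈ ℤ≥0`, then
`M(n,V) = V ⊗ M(n,k)`, i.e. `n×n` matrices over `V`, with
`Y^{M(n,V)}(A,z)B = (Y(v_{ij},z))·B` (matrix product), vacuum `1·Eₙ` and entrywise
translation operator, is an `S`-local vertex algebra. -/
theorem statement1 {k : Type*} [Field k] [CharZero k]
    {V : Type*} [AddCommGroup V] [Module k V]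
    (F : VAData k V) (hF : F.IsVertexAlgebra) (n : ℕ) :
    ∃ FM : VAData k (Matrix (Fin n) (Fin n) V),
      (∀ (A B : Matrix (Fin n) (Fin n) V) (m : ℤ) (i j : Fin n),
          FM.Y A m B i j = ∑ l : Fin n, F.Y (A i l) m (B l j)) ∧
      (∀ i j : Fin n, FM.vac i j = if i = j then F.vac else 0) ∧
      (∀ (A : Matrix (Fin n) (Fin n) V) (i j : Fin n), FM.T A i j = F.T (A i j)) ∧
      FM.IsSLocalVA :=
  statement1_general F hF n

end HopfVA
end

section
/- Let (M,Y^M,s_M) be a left module over a field algebra (V,Y,1,s). If M is finite-dimensional over k, then Y^M(a,z)m ∈ M[[z]] for every a ∈ V and m ∈ M; that is, a^M_n m = 0 for all n ≥ 0. -/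
open scoped TensorProduct DirectSum

/-!
On a finite-dimensional module the truncation `a^M_n m = 0` (`n ≫ 0`) holds uniformly in `m`,
so `a^M_n = 0` for all `n ≥ N`. Translation covariance `[s_M, a^M_n] = -n a^M_{n-1}` then lets
the vanishing descend from `a^M_n` to `a^M_{n-1}` as long as `n ≠ 0`, i.e. down to `n = 0`.
-/

open Filter

theorem LinearMap.eventually_eq_zero_of_forall_eventually_apply_eq_zero
    {R M N ι : Type*} [Semiring R] [AddCommMonoid M] [Module R M] [Module.Finite R M]
    [AddCommMonoid N] [Module R N] {f : ι → M →ₗ[R] N} {l : Filter ι}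
    (h : ∀ x, ∀ᶠ i in l, f i x = 0) : ∀ᶠ i in l, f i = 0 := by
  obtain ⟨S, hS⟩ := Module.Finite.fg_top (R := R) (M := M)
  filter_upwards [S.eventually_all.2 fun x _ => h x] with i hi
  exact LinearMap.ext_on hS hi

namespace HopfVA

section Descent

variable {R M : Type*} [Semiring R] [AddCommGroup M] [Module R M] [IsAddTorsionFree M]
  {s : M →ₗ[R] M} {f : ℤ → M →ₗ[R] M}

theorem sub_one_eq_zero_of_commutator
    (hcomm : ∀ x n, s (f n x) - f n (s x) = (-n : ℤ) • f (n - 1) x)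
    {n : ℤ} (hn : n ≠ 0) (hfn : f n = 0) : f (n - 1) = 0 := by
  ext x
  have h := hcomm x n
  rw [hfn, LinearMap.zero_apply, LinearMap.zero_apply, map_zero, sub_zero, eq_comm,
    smul_eq_zero] at h
  exact h.resolve_left (neg_ne_zero.2 hn)

theorem eq_zero_of_nonneg_of_commutator
    (hcomm : ∀ x n, s (f n x) - f n (s x) = (-n : ℤ) • f (n - 1) x)
    {N : ℤ} (hN : ∀ n, N ≤ n → f n = 0) {n : ℤ} (hn : 0 ≤ n) : f n = 0 := by
  suffices ∀ n ≤ max N 0, 0 ≤ n → f n = 0 by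
    rcases le_or_gt N n with h | h
    · exact hN n h
    · exact this n (le_max_of_le_left h.le) hn
  refine Int.leInductionDown (fun _ => hN _ (le_max_left N 0)) fun n _ ih hn => ?_
  exact sub_one_eq_zero_of_commutator hcomm (by omega) (ih (by omega))

end Descent

theorem statement2_general {k : Type*} [Field k] [CharZero k]
    {V : Type*} [AddCommGroup V] [Module k V]
    {M : Type*} [AddCommGroup M] [Module k M] [FiniteDimensional k M]
    (F : VAData k V)
    (Mo : VModData k V M) (hMo : VModData.IsModule F Mo) :
    ∀ (a : V) (m : M) (n : ℤ), 0 ≤ n → Mo.YM a n m = 0 := by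
  obtain ⟨htrunc, -, htrans, -⟩ := hMo
  intro a m n hn
  have : IsAddTorsionFree M := .of_isTorsionFree k M
  obtain ⟨N, hN⟩ := eventually_atTop.1 <|
    LinearMap.eventually_eq_zero_of_forall_eventually_apply_eq_zero (f := Mo.YM a)
      fun x => eventually_atTop.2 (htrunc a x)
  rw [eq_zero_of_nonneg_of_commutator (htrans a) hN hn, LinearMap.zero_apply]

/-- If `(M,Y^M,s_M)` is a left module over a field algebra `(V,Y,1,s)`
and `M` is finite-dimensional over `k`, then `Y^M(a,z)m ∈ M[[z]]` for all `a ∈ V`,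
`m ∈ M`: all modes `a^M_n m` with `n ≥ 0` vanish. -/
theorem statement2 {k : Type*} [Field k] [CharZero k]
    {V : Type*} [AddCommGroup V] [Module k V]
    {M : Type*} [AddCommGroup M] [Module k M] [FiniteDimensional k M]
    (F : VAData k V) (hF : F.IsFieldAlgebra)
    (Mo : VModData k V M) (hMo : VModData.IsModule F Mo) :
    ∀ (a : V) (m : M) (n : ℤ), 0 ≤ n → Mo.YM a n m = 0 :=
  statement2_general F Mo hMo

end HopfVA
end

section
/- Let H be a Hopf algebra over k, (V,Y,1,s) an H-module field algebra, and suppose H admits a left integral t (i.e. ht = ε(h)t for all h ∈ H) with ε(t) ≠ 0; normalize so that ε(t) = 1. Equip V⊗H with the field algebra structure Y_H(a⊗h,z)(b⊗g) = Σ_{n∈Z} a_n(h_1 b) ⊗ h_2 g · z^{−n−1}, vacuum 1⊗1, s(a⊗h) = sa⊗h. Then the map φ: V^H → {(1⊗t)_{−1}(v_{−1}(1⊗t)) : v ∈ V⊗H} given by φ(a) = a⊗t is a bijection satisfying φ(a_n b) = φ(a)_n φ(b) for all a,b ∈ V^H and n ∈ Z; i.e. V^H is isomorphic as a field algebra to {(1⊗t)_{−1}(v_{−1}(1⊗t))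 : v ∈ V⊗H}. -/
open scoped TensorProduct DirectSum

namespace HopfVA

/-!
If `t` is a left integral then `h₂ t = ε(h₂) t`, so in the smash product
`(a ⊗ h)ₙ(b ⊗ t) = ∑ aₙ(h₁b) ⊗ h₂t = aₙ(hb) ⊗ t`: the factor `t` absorbs the second tensor factor.
With `ε(t) = 1` and `tb = b` for `b ∈ V^H`, this makes `a ↦ a ⊗ t` multiplicative on `V^H`.
Every `(1 ⊗ t)₋₁(v₋₁(1 ⊗ t))` has the form `1₋₁(tc) ⊗ t = tc ⊗ t` with `tc ∈ V^H`, and conversely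
`a ⊗ t = (1 ⊗ t)₋₁((a ⊗ 1)₋₁(1 ⊗ t))` for `a ∈ V^H`.
-/

open Coalgebra

lemma exists_fin_sum_tmul {R M N : Type*} [CommSemiring R] [AddCommMonoid M] [Module R M]
    [AddCommMonoid N] [Module R N] (x : M ⊗[R] N) :
    ∃ (m : ℕ) (f : Fin m → M) (g : Fin m → N), x = ∑ i, f i ⊗ₜ[R] g i := by
  induction x using TensorProduct.induction_on with
  | zero => exact ⟨0, ![], ![], by simp⟩
  | tmul a b => exact ⟨1, ![a], ![b], by simp⟩
  | add x y hx hy =>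
    obtain ⟨m, f₁, g₁, rfl⟩ := hx
    obtain ⟨n, f₂, g₂, rfl⟩ := hy
    exact ⟨m + n, Fin.append f₁ f₂, Fin.append g₁ g₂, by simp [Fin.sum_univ_add]⟩

lemma tmul_left_injective_of_apply_eq_one {R M N : Type*} [CommSemiring R] [AddCommMonoid M]
    [Module R M] [AddCommMonoid N] [Module R N] (f : N →ₗ[R] R) {t : N} (ht : f t = 1) :
    Function.Injective (fun a : M => a ⊗ₜ[R] t) :=
  Function.LeftInverse.injective (g := TensorProduct.rid R M ∘ₗ f.lTensor M) fun a => by simp [ht]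

lemma sum_counit_smul_of_comul_eq {R C : Type*} [CommSemiring R] [AddCommMonoid C] [Module R C]
    [Coalgebra R C] {c : C} {m : ℕ} {c₁ c₂ : Fin m → C}
    (hΔ : comul (R := R) c = ∑ i, c₁ i ⊗ₜ[R] c₂ i) :
    ∑ i, counit (R := R) (c₂ i) • c₁ i = c := by
  simpa [hΔ, map_sum] using congr(TensorProduct.rid R C $(lTensor_counit_comul (R := R) c))

section Integral

variable {k H : Type*} [CommRing k]

variable (k) in
def IsLeftIntegral [Semiring H] [Bialgebra k H] (t : H) : Prop :=
  ∀ h : H, h * t = counit (R := k) h • t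

lemma IsLeftIntegral.smul [Semiring H] [Bialgebra k H] {t : H} (ht : IsLeftIntegral k t)
    (c : k) : IsLeftIntegral k (c • t) := fun h => by
  rw [mul_smul_comm, ht h, smul_comm]

variable [Ring H] [HopfAlgebra k H] {V : Type*} [AddCommGroup V] [Module k V] [Module H V]
  [IsScalarTower k H V]

lemma IsLeftIntegral.smul_mem_hFixed [SMulCommClass k H V] {t : H} (ht : IsLeftIntegral k t)
    (x : V) : t • x ∈ hFixed k V H := fun h => by
  rw [← mul_smul, ht h, smul_assoc]

variable {F : VAData k V} {FS : VAData k (V ⊗[k] H)}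

lemma SmashChar.Y_tmul_tmul_integral (hFS : SmashChar H F FS) {t : H}
    (ht : IsLeftIntegral k t) (a b : V) (h : H) (n : ℤ) :
    FS.Y (a ⊗ₜ[k] h) n (b ⊗ₜ[k] t) = F.Y a n (h • b) ⊗ₜ[k] t := by
  obtain ⟨m, h₁, h₂, hΔ⟩ := exists_fin_sum_tmul (comul (R := k) h)
  calc FS.Y (a ⊗ₜ[k] h) n (b ⊗ₜ[k] t)
      = ∑ i, F.Y a n (h₁ i • b) ⊗ₜ[k] (h₂ i * t) := hFS.1 a b h t n m h₁ h₂ hΔ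
    _ = ∑ i, F.Y a n ((counit (R := k) (h₂ i) • h₁ i) • b) ⊗ₜ[k] t := by
        refine Finset.sum_congr rfl fun i _ => ?_
        rw [ht, TensorProduct.tmul_smul, TensorProduct.smul_tmul',
          smul_assoc (counit (R := k) (h₂ i)) (h₁ i) b,
          map_smul (F.Y a n) (counit (R := k) (h₂ i))]
    _ = F.Y a n (h • b) ⊗ₜ[k] t := by
        rw [← TensorProduct.sum_tmul, ← map_sum, ← Finset.sum_smul,
          sum_counit_smul_of_comul_eq hΔ]

lemma SmashChar.exists_Y_tmul_integral_eq_tmul (hFS : SmashChar H F FS) {t : H}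
    (ht : IsLeftIntegral k t) (v : V ⊗[k] H) (b : V) (n : ℤ) :
    ∃ c : V, FS.Y v n (b ⊗ₜ[k] t) = c ⊗ₜ[k] t := by
  induction v using TensorProduct.induction_on with
  | zero => exact ⟨0, by simp⟩
  | tmul a h => exact ⟨_, hFS.Y_tmul_tmul_integral ht a b h n⟩
  | add x y hx hy =>
    obtain ⟨c, hc⟩ := hx
    obtain ⟨d, hd⟩ := hy
    exact ⟨c + d, by simp [hc, hd, TensorProduct.add_tmul]⟩

end Integral

theorem statement4_general {k : Type*} [Field k]
    {V : Type*} [AddCommGroup V] [Module k V]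
    {H : Type*} [Ring H] [HopfAlgebra k H]
    [Module H V] [IsScalarTower k H V] [SMulCommClass k H V]
    (F : VAData k V) (hF : F.IsFieldAlgebra)
    (FS : VAData k (V ⊗[k] H)) (hFS : SmashChar H F FS)
    (t : H) (ht : ∀ h : H, h * t = (Coalgebra.counit (R := k) h) • t)
    (ht0 : Coalgebra.counit (R := k) t ≠ 0) :
    ∃ t' : H, (∀ h : H, h * t' = (Coalgebra.counit (R := k) h) • t') ∧
      Coalgebra.counit (R := k) t' = 1 ∧
      (Set.InjOn (fun a : V => a ⊗ₜ[k] t') (hFixed k V H)) ∧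
      ((fun a : V => a ⊗ₜ[k] t') '' (hFixed k V H) =
        {x : V ⊗[k] H | ∃ v : V ⊗[k] H,
          x = FS.Y (F.vac ⊗ₜ[k] t') (-1) (FS.Y v (-1) (F.vac ⊗ₜ[k] t'))}) ∧
      (∀ a ∈ hFixed k V H, ∀ b ∈ hFixed k V H, ∀ n : ℤ,
        FS.Y (a ⊗ₜ[k] t') n (b ⊗ₜ[k] t') = (F.Y a n b : V) ⊗ₜ[k] t') := by
  set t' := (counit (R := k) t)⁻¹ • t
  have ht' : IsLeftIntegral k t' := IsLeftIntegral.smul ht _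
  have hεt' : counit (R := k) t' = 1 := by simp [t', ht0]
  have hY : ∀ (a b : V) (n : ℤ), FS.Y (a ⊗ₜ[k] t') n (b ⊗ₜ[k] t') = F.Y a n (t' • b) ⊗ₜ[k] t' :=
    fun a b n => hFS.Y_tmul_tmul_integral ht' a b t' n
  have hfixed : ∀ b ∈ hFixed k V H, t' • b = b := fun b hb => by rw [hb t', hεt', one_smul]
  have hvac_left : ∀ c : V, F.Y F.vac (-1) c = c := fun c => by simp [hF.1.2.1]
  refine ⟨t', ht', hεt', (tmul_left_injective_of_apply_eq_one _ hεt').injOn, ?_, ?_⟩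
  · ext x
    constructor
    · rintro ⟨a, ha, rfl⟩
      refine ⟨a ⊗ₜ[k] 1, ?_⟩
      rw [hFS.Y_tmul_tmul_integral ht', one_smul, hF.1.2.2.2.1, hY, hfixed a ha, hvac_left]
    · rintro ⟨v, rfl⟩
      obtain ⟨c, hc⟩ := hFS.exists_Y_tmul_integral_eq_tmul ht' v F.vac (-1)
      exact ⟨t' • c, ht'.smul_mem_hFixed c, by rw [hc, hY, hvac_left]⟩
  · intro a _ b hb n
    rw [hY, hfixed b hb]

/-- Let `V` be an `H`-module field algebra and suppose `H` admits a
left integral `t` with `ε(t) ≠ 0`.  Then there is a left integral `t` with `ε(t) = 1`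
such that the map `φ(a) = a ⊗ t` is a bijection from `V^H` onto
`{(1⊗t)₋₁(v₋₁(1⊗t)) : v ∈ V ⊗ H}` intertwining all `n`-th products; i.e. `V^H` is
isomorphic to that subset as a field algebra. -/
theorem statement4 {k : Type*} [Field k] [CharZero k]
    {V : Type*} [AddCommGroup V] [Module k V]
    {H : Type*} [Ring H] [HopfAlgebra k H]
    [Module H V] [IsScalarTower k H V] [SMulCommClass k H V]
    (F : VAData k V) (hF : F.IsFieldAlgebra) (hHF : IsHModuleFA H F)
    (FS : VAData k (V ⊗[k] H)) (hFS : SmashChar H F FS)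
    (t : H) (ht : ∀ h : H, h * t = (Coalgebra.counit (R := k) h) • t)
    (ht0 : Coalgebra.counit (R := k) t ≠ 0) :
    ∃ t' : H, (∀ h : H, h * t' = (Coalgebra.counit (R := k) h) • t') ∧
      Coalgebra.counit (R := k) t' = 1 ∧
      (Set.InjOn (fun a : V => a ⊗ₜ[k] t') (hFixed k V H)) ∧
      ((fun a : V => a ⊗ₜ[k] t') '' (hFixed k V H) =
        {x : V ⊗[k] H | ∃ v : V ⊗[k] H,
          x = FS.Y (F.vac ⊗ₜ[k] t') (-1) (FS.Y v (-1) (F.vac ⊗ₜ[k] t'))}) ∧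
      (∀ a ∈ hFixed k V H, ∀ b ∈ hFixed k V H, ∀ n : ℤ,
        FS.Y (a ⊗ₜ[k] t') n (b ⊗ₜ[k] t') = (F.Y a n b : V) ⊗ₜ[k] t') :=
  statement4_general F hF FS hFS t ht ht0

end HopfVA
end
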